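/- Witt decomposition in 𝕆 ⊗ Cl_{8n}: let n ≥ 1 and X = Σ_{l=0}^{8n−1} x_l·b_l ∈ ℝ^{8n}. For k = 0,…,n−1 set p^k := Σ_{m=0}^{7} x_{8k+m}·e_m ∈ 𝕆. Then 1 ⊗ ι(X) = (1/8)·Σ_{k=0}^{n−1} Σ_{i=0}^{7} f_i^k·(J_i(p^k) ⊗ 1) in 𝕆 ⊗ Cl_{8n}. -/

import Mathlib

noncomputable section

open scoped Quaternion TensorProduct

/-- The octonions, realized as the Cayley–Dickson double of the quaternions. -/
def Oct : Type := ℍ × ℍ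

namespace Oct

instance : AddCommGroup Oct := (inferInstance : AddCommGroup (ℍ × ℍ))
instance : Module ℝ Oct := (inferInstance : Module ℝ (ℍ × ℍ))

/-- First (quaternionic) component. -/
def x (p : Oct) : ℍ := Prod.fst p
/-- Second (quaternionic) component. -/
def y (p : Oct) : ℍ := Prod.snd p
/-- Build an octonion from two quaternions. -/
def mk (a b : ℍ) : Oct := ((a, b) : ℍ × ℍ)

@[simp] lemma x_mk (a b : ℍ) : (mk a b).x = a := rfl
@[simp] lemma y_mk (a b : ℍ) : (mk a b).y = b := rfl
@[simp] lemma x_add (p q : Oct) : (p + q).x = p.x + q.x := rfl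
@[simp] lemma y_add (p q : Oct) : (p + q).y = p.y + q.y := rfl
@[simp] lemma x_smul (r : ℝ) (p : Oct) : (r • p).x = r • p.x := rfl
@[simp] lemma y_smul (r : ℝ) (p : Oct) : (r • p).y = r • p.y := rfl
@[simp] lemma x_zero : (0 : Oct).x = 0 := rfl
@[simp] lemma y_zero : (0 : Oct).y = 0 := rfl

@[ext] lemma ext {p q : Oct} (h1 : p.x = q.x) (h2 : p.y = q.y) : p = q :=
  Prod.ext h1 h2

/-- Cayley–Dickson multiplication: `(a,b)·(c,d) = (a·c − conj(d)·b, d·a + b·conj(c))`. -/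
instance : Mul Oct :=
  ⟨fun p q => mk (p.x * q.x - star q.y * p.y) (q.y * p.x + p.y * star q.x)⟩

instance : One Oct := ⟨mk 1 0⟩

@[simp] lemma x_mul (p q : Oct) : (p * q).x = p.x * q.x - star q.y * p.y := rfl
@[simp] lemma y_mul (p q : Oct) : (p * q).y = q.y * p.x + p.y * star q.x := rfl
@[simp] lemma x_one : (1 : Oct).x = 1 := rfl
@[simp] lemma y_one : (1 : Oct).y = 0 := rfl

instance : NonUnitalNonAssocRing Oct :=
  { (inferInstance : AddCommGroup Oct) with
    mul := (· * ·)
    left_distrib := by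
      intro p q r
      refine ext ?_ ?_ <;>
        simp only [x_mul, y_mul, x_add, y_add, star_add] <;> noncomm_ring
    right_distrib := by
      intro p q r
      refine ext ?_ ?_ <;>
        simp only [x_mul, y_mul, x_add, y_add, star_add] <;> noncomm_ring
    zero_mul := by
      intro p
      refine ext ?_ ?_ <;> simp only [x_mul, y_mul, x_zero, y_zero, star_zero] <;> simp
    mul_zero := by
      intro p
      refine ext ?_ ?_ <;> simp only [x_mul, y_mul, x_zero, y_zero, star_zero] <;> simp }

instance : SMulCommClass ℝ Oct Oct where
  smul_comm r p q := by
    show r • (p * q) = p * (r • q)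
    refine ext ?_ ?_ <;>
      simp [x_mul, y_mul, smul_sub, smul_add, mul_smul_comm, smul_mul_assoc,
        star_smul, star_trivial]

instance : IsScalarTower ℝ Oct Oct where
  smul_assoc r p q := by
    show (r • p) * q = r • (p * q)
    refine ext ?_ ?_ <;>
      simp [x_mul, y_mul, smul_sub, smul_add, mul_smul_comm, smul_mul_assoc,
        star_smul, star_trivial]

/-- Octonionic conjugation: `conj (a,b) = (conj a, −b)`. -/
def conj (p : Oct) : Oct := mk (star p.x) (-p.y)

/-- The real part of an octonion. -/
def re (p : Oct) : ℝ := p.x.re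

/-- The standard basis `e_0, …, e_7` of the octonions. -/
def e : Fin 8 → Oct :=
  ![mk 1 0, mk ⟨0, 1, 0, 0⟩ 0, mk ⟨0, 0, 1, 0⟩ 0, mk ⟨0, 0, 0, 1⟩ 0,
    mk 0 1, mk 0 ⟨0, 1, 0, 0⟩, mk 0 ⟨0, 0, 1, 0⟩, mk 0 ⟨0, 0, 0, 1⟩]

/-- The real coordinates of an octonion with respect to the standard basis. -/
def coord : Fin 8 → Oct → ℝ :=
  ![fun p => p.x.re, fun p => p.x.imI, fun p => p.x.imJ, fun p => p.x.imK,
    fun p => p.y.re, fun p => p.y.imI, fun p => p.y.imJ, fun p => p.y.imK]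

lemma coord_add (j : Fin 8) (p q : Oct) :
    coord j (p + q) = coord j p + coord j q := by fin_cases j <;> rfl

lemma coord_smul (j : Fin 8) (r : ℝ) (p : Oct) :
    coord j (r • p) = r * coord j p := by fin_cases j <;> rfl

/-- The binary "dot product" `⟨i,j⟩ = i₁j₁ + i₂j₂ + i₃j₃` of binary digits. -/
def bdot (i j : Fin 8) : ℕ :=
  ((i.val.testBit 0 && j.val.testBit 0).toNat +
   (i.val.testBit 1 && j.val.testBit 1).toNat +
   (i.val.testBit 2 && j.val.testBit 2).toNat) % 2

/-- The involution `J_i`, the ℝ-linear map determined by `J_i(e_j) = (−1)^{⟨i,j⟩} e_j`. -/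
def J (i : Fin 8) : Oct →ₗ[ℝ] Oct where
  toFun p := ∑ j : Fin 8, ((-1 : ℝ) ^ bdot i j * coord j p) • e j
  map_add' p q := by
    simp only [coord_add, mul_add, add_smul]
    rw [Finset.sum_add_distrib]
  map_smul' r p := by
    simp only [coord_smul, RingHom.id_apply, Finset.smul_sum, smul_smul, mul_left_comm]

/-- The sign `σ(j,i)` defined by `J_j(conj e_i) = (−1)^{σ(j,i)} e_i`. -/
def sigma (j i : Fin 8) : ℕ := if i = 0 then 0 else (bdot j i + 1) % 2

end Oct

/-- The quadratic form `Q(v) = −‖v‖²` on `ℝ^{8n}`. -/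
def Qn (n : ℕ) : QuadraticForm ℝ (EuclideanSpace ℝ (Fin (8 * n))) :=
  - LinearMap.BilinMap.toQuadraticMap
      (innerₗ (EuclideanSpace ℝ (Fin (8 * n))) : LinearMap.BilinForm ℝ (EuclideanSpace ℝ (Fin (8 * n))))

/-- The Clifford algebra `Cl_{8n}` of `Q(v) = −‖v‖²` on `ℝ^{8n}`. -/
abbrev Cln (n : ℕ) := CliffordAlgebra (Qn n)

/-- The index `8k + m` of `ℝ^{8n}`. -/
def idx (n : ℕ) (k : Fin n) (m : Fin 8) : Fin (8 * n) :=
  ⟨8 * k.val + m.val, by omega⟩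

/-- The Clifford generators `g_l := ι(b_l)` of `Cl_{8n}`. -/
def gn (n : ℕ) (l : Fin (8 * n)) : Cln n :=
  CliffordAlgebra.ι (Qn n) (EuclideanSpace.single l 1)

/-- The elements `Ω_k := Σ_m conj(e_m) ⊗ g_{8k+m}` of `𝕆 ⊗ Cl_{8n}`. -/
def OmegaN (n : ℕ) (k : Fin n) : Oct ⊗[ℝ] Cln n :=
  ∑ m : Fin 8, (Oct.e m).conj ⊗ₜ[ℝ] gn n (idx n k m)

/-- The octonionic Witt basis `f_i^k := (J_i ⊗ id)(Ω_k)` of `𝕆 ⊗ Cl_{8n}`. -/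
def fN (n : ℕ) (i : Fin 8) (k : Fin n) : Oct ⊗[ℝ] Cln n :=
  TensorProduct.map (Oct.J i) LinearMap.id (OmegaN n k)

/-- The octonion `p^k := Σ_m x_{8k+m}·e_m` built from the `k`-th block of `X ∈ ℝ^{8n}`. -/
def pslice (n : ℕ) (X : EuclideanSpace ℝ (Fin (8 * n))) (k : Fin n) : Oct :=
  ∑ m : Fin 8, X (idx n k m) • Oct.e m

/-! The signs `(-1)^⟨i,m⟩` are the characters of `(ℤ/2)³`, so by orthogonality
`Σ_i J_i(conj e_m) · J_i(e_m') = 8 δ_{mm'} · conj(e_m) · e_m = 8 δ_{mm'}`, i.e. the sum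
`Σ_i J_i(conj e_m) · J_i(p)` extracts `8` times the `m`-th coordinate of `p`. Since
`f_i^k · (q ⊗ 1) = Σ_m J_i(conj e_m) · q ⊗ g_{8k+m}`, the `k`-th block of the right-hand side is
`8 Σ_m x_{8k+m} · (1 ⊗ g_{8k+m})`, and summing over the blocks gives `8 · (1 ⊗ ι(X))`. -/

namespace Oct

lemma coord_e (j j' : Fin 8) : coord j' (e j) = if j' = j then 1 else 0 := by
  fin_cases j <;> fin_cases j' <;> rfl

lemma J_e (i j : Fin 8) : J i (e j) = ((-1 : ℝ) ^ bdot i j) • e j := by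
  simp [J, coord_e, mul_ite, ite_smul, Finset.sum_ite_eq']

lemma conj_e (m : Fin 8) : conj (e m) = (if m = 0 then (1 : ℝ) else -1) • e m := by
  fin_cases m <;> refine Oct.ext ?_ ?_ <;> simp only [x_smul, y_smul] <;> ext <;>
    norm_num [conj, e] <;> norm_num [mk, x, y]

lemma conj_e_mul_e (m : Fin 8) : conj (e m) * e m = 1 := by
  fin_cases m <;> refine Oct.ext ?_ ?_ <;> ext <;>
    norm_num [conj, e, Quaternion.re_mul, Quaternion.imI_mul, Quaternion.imJ_mul,
      Quaternion.imK_mul] <;> norm_num [mk, x, y]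

lemma J_conj_e (i m : Fin 8) : J i (conj (e m)) = ((-1 : ℝ) ^ bdot i m) • conj (e m) := by
  rw [conj_e, map_smul, J_e, smul_comm]

lemma sum_neg_one_pow_bdot_mul (m m' : Fin 8) :
    ∑ i : Fin 8, (-1 : ℝ) ^ bdot i m * (-1 : ℝ) ^ bdot i m' = if m = m' then 8 else 0 := by
  have h : ∀ m m' : Fin 8, ∑ i : Fin 8, (-1 : ℤ) ^ bdot i m * (-1 : ℤ) ^ bdot i m'
      = if m = m' then 8 else 0 := by decide
  exact_mod_cast h m m'

lemma sum_J_conj_e_mul_J_e (m m' : Fin 8) :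
    ∑ i, J i (conj (e m)) * J i (e m') = if m = m' then (8 : ℝ) • (1 : Oct) else 0 := by
  simp_rw [J_conj_e, J_e, smul_mul_smul_comm, ← Finset.sum_smul, sum_neg_one_pow_bdot_mul]
  split_ifs with h
  · rw [h, conj_e_mul_e]
  · exact zero_smul _ _

lemma sum_J_conj_e_mul_J_sum_smul_e (m : Fin 8) (c : Fin 8 → ℝ) :
    ∑ i, J i (conj (e m)) * J i (∑ m', c m' • e m') = (8 * c m) • (1 : Oct) := by
  simp_rw [map_sum, map_smul, Finset.mul_sum, mul_smul_comm]
  rw [Finset.sum_comm]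
  simp_rw [← Finset.smul_sum, sum_J_conj_e_mul_J_e, smul_ite, smul_zero, Finset.sum_ite_eq,
    Finset.mem_univ, if_true, smul_smul, mul_comm (c m)]

end Oct

def idxEquiv (n : ℕ) : Fin n × Fin 8 ≃ Fin (8 * n) :=
  finProdFinEquiv.trans (finCongr (mul_comm n 8))

lemma idxEquiv_apply (n : ℕ) (p : Fin n × Fin 8) : idxEquiv n p = idx n p.1 p.2 :=
  Fin.ext (by simp [idxEquiv, idx, finProdFinEquiv]; ring)

lemma sum_eq_sum_sum_idx {M : Type*} [AddCommMonoid M] (n : ℕ) (F : Fin (8 * n) → M) :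
    ∑ l, F l = ∑ k : Fin n, ∑ m : Fin 8, F (idx n k m) := by
  rw [← Fintype.sum_prod_type', ← (idxEquiv n).sum_comp]
  simp only [idxEquiv_apply]

lemma iota_eq_sum_smul_gn (n : ℕ) (X : EuclideanSpace ℝ (Fin (8 * n))) :
    CliffordAlgebra.ι (Qn n) X = ∑ l, X l • gn n l := by
  conv_lhs => rw [← (EuclideanSpace.basisFun (Fin (8 * n)) ℝ).sum_repr X]
  simp [gn]

lemma fN_mul_tmul_one (n : ℕ) (i : Fin 8) (k : Fin n) (q : Oct) :
    fN n i k * (q ⊗ₜ[ℝ] (1 : Cln n))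
      = ∑ m, (Oct.J i (Oct.e m).conj * q) ⊗ₜ[ℝ] gn n (idx n k m) := by
  simp [fN, OmegaN, Finset.sum_mul, Algebra.TensorProduct.tmul_mul_tmul]

lemma sum_fN_mul_J_pslice_tmul_one (n : ℕ) (X : EuclideanSpace ℝ (Fin (8 * n))) (k : Fin n) :
    ∑ i, fN n i k * (Oct.J i (pslice n X k) ⊗ₜ[ℝ] (1 : Cln n))
      = ∑ m, (8 * X (idx n k m)) • ((1 : Oct) ⊗ₜ[ℝ] gn n (idx n k m)) := by
  simp_rw [fN_mul_tmul_one]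
  rw [Finset.sum_comm]
  simp_rw [← TensorProduct.sum_tmul, pslice, Oct.sum_J_conj_e_mul_J_sum_smul_e,
    TensorProduct.smul_tmul']

theorem witt_decomposition_8n_general (n : ℕ)
    (X : EuclideanSpace ℝ (Fin (8 * n))) :
    (1 : Oct) ⊗ₜ[ℝ] CliffordAlgebra.ι (Qn n) X
      = (8 : ℝ)⁻¹ • ∑ k : Fin n, ∑ i : Fin 8,
          fN n i k * (Oct.J i (pslice n X k) ⊗ₜ[ℝ] (1 : Cln n)) := by
  simp_rw [sum_fN_mul_J_pslice_tmul_one, iota_eq_sum_smul_gn, TensorProduct.tmul_sum,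
    TensorProduct.tmul_smul, sum_eq_sum_sum_idx n, Finset.smul_sum, smul_smul,
    inv_mul_cancel_left₀ (by norm_num : (8 : ℝ) ≠ 0)]

/-- Witt decomposition in `𝕆 ⊗ Cl_{8n}`: for `n ≥ 1` and `X ∈ ℝ^{8n}`,
`1 ⊗ ι(X) = (1/8)·Σ_{k<n} Σ_{i<8} f_i^k·(J_i(p^k) ⊗ 1)`. -/
theorem witt_decomposition_8n (n : ℕ) (hn : 1 ≤ n)
    (X : EuclideanSpace ℝ (Fin (8 * n))) :
    (1 : Oct) ⊗ₜ[ℝ] CliffordAlgebra.ι (Qn n) X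
      = (8 : ℝ)⁻¹ • ∑ k : Fin n, ∑ i : Fin 8,
          fN n i k * (Oct.J i (pslice n X k) ⊗ₜ[ℝ] (1 : Cln n)) :=
  witt_decomposition_8n_general n X
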